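/- Let φ be a continuous flow on a compact metric space M, let x ∈ M, and let Λ = ω(x) be the ω-limit set of x. Suppose σ ∈ Λ is a fixed point of the flow and r > 0 is such that Λ is not contained in the closed ball of radius r around σ. Then there exists y ∈ Λ with d(y, σ) = r and d(φ_t(y), σ) ≤ r for all t ≥ 0. -/

import Mathlib

/-!
Since the orbit of `x` accumulates both on `σ` and on a point farther than `r` from `σ`, it
crosses the sphere of radius `r` about `σ` infinitely often on its way in. At the last crossing
time `τₙ` before a visit within `1/(n+1)` of `σ`, the orbit stays in the closed ball until that
visit. A limit `y` of the points `φ τₙ x` lies on the sphere, and the dwell times in the ball tend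
to infinity: otherwise a limit dwell time `c` would give `φ c y = σ`, so `y = σ` as `σ` is fixed.
Hence the whole forward orbit of `y` stays in the closed ball.
-/

open Filter Topology Set Metric

theorem mapClusterPt_atTop_iff_forall_dist_lt {ι M : Type*} [Preorder ι] [IsDirectedOrder ι]
    [Nonempty ι] [PseudoMetricSpace M] {γ : ι → M} {y : M} :
    MapClusterPt y atTop γ ↔ ∀ ε > (0 : ℝ), ∀ T : ι, ∃ t ≥ T, dist (γ t) y < ε := by
  simp only [nhds_basis_ball.mapClusterPt_iff_frequently, frequently_atTop, mem_ball, ge_iff_le]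

theorem ContinuousOn.exists_last_eq_of_le_of_lt {f : ℝ → ℝ} {a b r : ℝ}
    (hf : ContinuousOn f (Icc a b)) (hab : a ≤ b) (ha : r ≤ f a) (hb : f b < r) :
    ∃ τ ∈ Ico a b, f τ = r ∧ ∀ s ∈ Icc τ b, f s ≤ r := by
  set S := Icc a b ∩ f ⁻¹' Ici r
  have hS : IsClosed S := hf.preimage_isClosed_of_isClosed isClosed_Icc isClosed_Ici
  have haS : a ∈ S := ⟨left_mem_Icc.2 hab, ha⟩
  have hSb : BddAbove S := ⟨b, fun s hs => hs.1.2⟩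
  have hτS : sSup S ∈ S := hS.csSup_mem ⟨a, haS⟩ hSb
  have hτb : sSup S < b := lt_of_le_of_ne hτS.1.2 fun h => (h ▸ hτS.2 : r ≤ f b).not_gt hb
  have hafter : ∀ s ∈ Ioc (sSup S) b, f s ≤ r := fun s hs => le_of_not_ge fun hrs =>
    (le_csSup hSb ⟨⟨(le_csSup hSb haS).trans hs.1.le, hs.2⟩, hrs⟩).not_gt hs.1
  have hle : ∀ s ∈ Icc (sSup S) b, f s ≤ r := by
    have hT : IsClosed (Icc a b ∩ f ⁻¹' Iic r) :=
      hf.preimage_isClosed_of_isClosed isClosed_Icc isClosed_Iic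
    have hsub : Ioc (sSup S) b ⊆ Icc a b ∩ f ⁻¹' Iic r := fun u hu =>
      ⟨⟨(le_csSup hSb haS).trans hu.1.le, hu.2⟩, hafter u hu⟩
    intro s hs
    rw [← closure_Ioc hτb.ne] at hs
    exact (hT.closure_subset_iff.2 hsub hs).2
  exact ⟨sSup S, ⟨hτS.1.1, hτb⟩, le_antisymm (hle _ (left_mem_Icc.2 hτb.le)) hτS.2, hle⟩

theorem exists_dist_exit_of_mapClusterPt {M : Type*} [PseudoMetricSpace M] {γ : ℝ → M}
    (hγ : Continuous γ) {z σ : M} {r ε : ℝ} (hr : 0 < r) (hε : 0 < ε)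
    (hz : MapClusterPt z atTop γ) (hrz : r < dist z σ) (hσ : MapClusterPt σ atTop γ) (T : ℝ) :
    ∃ τ ≥ T, ∃ t ≥ τ, dist (γ τ) σ = r ∧ (∀ s ∈ Icc τ t, dist (γ s) σ ≤ r) ∧
      dist (γ t) σ < ε := by
  have hfar : {p | r < dist p σ} ∈ 𝓝 z :=
    (isOpen_lt continuous_const (continuous_id.dist continuous_const)).mem_nhds hrz
  obtain ⟨u, hTu, hu⟩ := frequently_atTop.1 (mapClusterPt_iff_frequently.1 hz _ hfar) T
  obtain ⟨t, hut, ht⟩ := frequently_atTop.1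
    (mapClusterPt_iff_frequently.1 hσ _ (ball_mem_nhds σ (lt_min hr hε))) u
  rw [mem_ball, lt_min_iff] at ht
  obtain ⟨τ, ⟨huτ, hτt⟩, hτr, hle⟩ := (hγ.dist continuous_const).continuousOn
    |>.exists_last_eq_of_le_of_lt hut hu.le ht.1
  exact ⟨τ, hTu.trans huτ, t, hτt.le, hτr, hle, ht.2⟩

namespace Flow

variable {M : Type*} [MetricSpace M] (ϕ : Flow ℝ M)

theorem tendsto_atTop_of_tendsto_fixedPoint {p : ℕ → M} {d : ℕ → ℝ} {y σ : M}
    (hp : Tendsto p atTop (𝓝 y)) (hd : ∀ n, 0 ≤ d n)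
    (hpσ : Tendsto (fun n => ϕ (d n) (p n)) atTop (𝓝 σ)) (hσ : ∀ t, ϕ t σ = σ) (hy : y ≠ σ) :
    Tendsto d atTop atTop := by
  by_contra h
  obtain ⟨C, hC⟩ : ∃ C, ∃ᶠ n in atTop, d n < C := by
    simpa [Filter.tendsto_atTop, frequently_atTop] using h
  obtain ⟨θ, hθ, hθC⟩ := extraction_of_frequently_atTop hC
  obtain ⟨c, -, θ', hθ', hc⟩ :=
    (isCompact_Icc (a := 0) (b := C)).tendsto_subseq fun n => ⟨hd (θ n), (hθC n).le⟩
  have hmono := (hθ.comp hθ').tendsto_atTop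
  have hlim : Tendsto (fun n => ϕ (d (θ (θ' n))) (p (θ (θ' n)))) atTop (𝓝 (ϕ c y)) :=
    (ϕ.cont'.tendsto (c, y)).comp (hc.prodMk_nhds (hp.comp hmono))
  have hcy : ϕ c y = ϕ c σ := by
    rw [hσ, tendsto_nhds_unique hlim (hpσ.comp hmono)]
  exact hy ((ϕ.toHomeomorph c).injective hcy)

theorem apply_mem_of_tendsto {p : ℕ → M} {d : ℕ → ℝ} {y : M} {F : Set M}
    (hF : IsClosed F) (hp : Tendsto p atTop (𝓝 y)) (hd : Tendsto d atTop atTop)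
    (hpF : ∀ n, ∀ s ∈ Icc 0 (d n), ϕ s (p n) ∈ F) {t : ℝ} (ht : 0 ≤ t) : ϕ t y ∈ F :=
  hF.mem_of_tendsto ((ϕ.continuous_toFun t).tendsto y |>.comp hp) <|
    (hd.eventually_ge_atTop t).mono fun n hn => hpF n t ⟨ht, hn⟩

theorem exists_mapClusterPt_dist_eq_forall_dist_le [CompactSpace M] {x σ z : M} {r : ℝ}
    (hr : 0 < r) (hσ : MapClusterPt σ atTop (ϕ · x)) (hfix : ∀ t, ϕ t σ = σ)
    (hz : MapClusterPt z atTop (ϕ · x)) (hrz : r < dist z σ) :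
    ∃ y, MapClusterPt y atTop (ϕ · x) ∧ dist y σ = r ∧ ∀ t ≥ (0 : ℝ), dist (ϕ t y) σ ≤ r := by
  have hγ : Continuous (ϕ · x) := ϕ.continuous continuous_id continuous_const
  choose τ hτ t hτt hτr hle hlt using fun n : ℕ =>
    exists_dist_exit_of_mapClusterPt hγ hr (Nat.one_div_pos_of_nat (n := n)) hz hrz hσ n
  obtain ⟨y, -, ψ, hψ, hy⟩ :=
    isCompact_univ.tendsto_subseq (x := fun n => ϕ (τ n) x) fun _ => mem_univ _
  have hτ_atTop : Tendsto τ atTop atTop := tendsto_atTop_mono hτ tendsto_natCast_atTop_atTop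
  have hyr : dist y σ = r :=
    tendsto_nhds_unique (hy.dist tendsto_const_nhds) (by simp [hτr])
  have ht : Tendsto (fun n => ϕ (t n) x) atTop (𝓝 σ) :=
    tendsto_iff_dist_tendsto_zero.2 <| squeeze_zero (fun _ => dist_nonneg) (fun n => (hlt n).le)
      tendsto_one_div_add_atTop_nhds_zero_nat
  have hshift : ∀ n s, ϕ s (ϕ (τ n) x) = ϕ (s + τ n) x := fun n s => (ϕ.map_add _ _ _).symm
  have hdwell : Tendsto (fun n => t (ψ n) - τ (ψ n)) atTop atTop := by
    refine ϕ.tendsto_atTop_of_tendsto_fixedPoint hy (fun n => sub_nonneg.2 (hτt _)) ?_ hfix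
      (by rintro rfl; simp [hr.ne] at hyr)
    simpa only [Function.comp_def, hshift, sub_add_cancel] using ht.comp hψ.tendsto_atTop
  refine ⟨y, hy.mapClusterPt.of_comp (hτ_atTop.comp hψ.tendsto_atTop), hyr, fun s hs => ?_⟩
  refine ϕ.apply_mem_of_tendsto isClosed_closedBall hy hdwell (fun n s hs => ?_) hs
  rw [Function.comp_apply, hshift, mem_closedBall]
  exact hle _ _ ⟨le_add_of_nonneg_left hs.1, le_sub_iff_add_le.1 hs.2⟩

end Flow

theorem stmt3 {M : Type*} [MetricSpace M] [CompactSpace M]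
    (φ : ℝ → M → M)
    (hcont : Continuous fun p : ℝ × M => φ p.1 p.2)
    (hφ0 : ∀ x, φ 0 x = x)
    (hφadd : ∀ s t x, φ (s + t) x = φ s (φ t x))
    (x : M) (Λ : Set M)
    (hΛ : Λ = {y | ∀ ε > (0:ℝ), ∀ T : ℝ, ∃ t ≥ T, dist (φ t x) y < ε})
    (σ : M) (hσΛ : σ ∈ Λ) (hfix : ∀ t, φ t σ = σ)
    (r : ℝ) (hr : 0 < r)
    (hnot : ∃ z ∈ Λ, r < dist z σ) :
    ∃ y ∈ Λ, dist y σ = r ∧ ∀ t ≥ (0:ℝ), dist (φ t y) σ ≤ r := by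
  let ϕ : Flow ℝ M := ⟨φ, hcont, hφadd, hφ0⟩
  have hΛ' : Λ = {y | MapClusterPt y atTop (ϕ · x)} := by
    simp only [hΛ, mapClusterPt_atTop_iff_forall_dist_lt]
    rfl
  rw [hΛ'] at hσΛ hnot ⊢
  obtain ⟨z, hz, hrz⟩ := hnot
  exact ϕ.exists_mapClusterPt_dist_eq_forall_dist_le hr hσΛ hfix hz hrz
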